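/- arXiv:1305.7308 — 2 statements merged into one kernel-verified Lean document; each statement's English description precedes it below -/
import Mathlib

section
/- Let f : (0,∞) → (0,∞) be continuous and let H be a complex Hilbert space. Suppose that for every unital positive linear map Φ : B(H⊕H) → B(H) and every strictly positive operator X ∈ B(H⊕H) one has f(Φ(X)) ≤ Φ(f(X)⁻¹)⁻¹. Then f(A∇B) ≤ f(A)♯f(B) for all strictly positive A, B ∈ B(H); indeed the stronger inequality f(A∇B) ≤ f(A)!f(B) holds, where A!B denotes the harmonic mean. -/
noncomputable section

open MeasureTheory

universe u

section Defs

variable {H : Type*} [NormedAddCommGroup H] [InnerProductSpace ℂ H] [CompleteSpace H]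

/-- An operator on a complex Hilbert space is *strictly positive* if it is positive
(in the Loewner order, hence self-adjoint) and invertible. -/
def StrictlyPos (A : H →L[ℂ] H) : Prop := 0 ≤ A ∧ IsUnit A

/-- Real powers of an operator, defined via the continuous functional calculus applied to
`t ↦ t ^ r`. -/
def opPow (A : H →L[ℂ] H) (r : ℝ) : H →L[ℂ] H := cfc (fun x : ℝ => x ^ r) A

/-- The arithmetic mean `A∇B = (A + B)/2`. -/
def arithMean (A B : H →L[ℂ] H) : H →L[ℂ] H := (2 : ℝ)⁻¹ • (A + B)

/-- The geometric mean `A♯B = B^{1/2} (B^{-1/2} A B^{-1/2})^{1/2} B^{1/2}`. -/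
def geomMean (A B : H →L[ℂ] H) : H →L[ℂ] H :=
  opPow B (1/2) * opPow (opPow B (-(1/2)) * A * opPow B (-(1/2))) (1/2) * opPow B (1/2)

/-- The harmonic mean `A!B = ((A⁻¹ + B⁻¹)/2)⁻¹`. -/
def harmMean (A B : H →L[ℂ] H) : H →L[ℂ] H :=
  Ring.inverse ((2 : ℝ)⁻¹ • (Ring.inverse A + Ring.inverse B))

/-- The perspective `g(A, B) = B^{1/2} f(B^{-1/2} A B^{-1/2}) B^{1/2}` of a function
`f : (0,∞) → (0,∞)`, where `f` acts through the continuous functional calculus. -/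
def persp (f : ℝ → ℝ) (A B : H →L[ℂ] H) : H →L[ℂ] H :=
  opPow B (1/2) * cfc f (opPow B (-(1/2)) * A * opPow B (-(1/2))) * opPow B (1/2)

/-- The (real) inner product `⟨Ax, x⟩`, which is a real number for self-adjoint `A`. -/
def rIP (A : H →L[ℂ] H) (x : H) : ℝ := (inner ℂ (A x) x : ℂ).re

end Defs

/-- A function `f : (0,∞) → (0,∞)` is *operator log-convex* if `f(A∇B) ≤ f(A)♯f(B)` for every
complex Hilbert space `H` and all strictly positive `A, B ∈ B(H)`, where `f` acts via the
continuous functional calculus. -/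
def OperatorLogConvex (f : ℝ → ℝ) : Prop :=
  ∀ (H : Type u) [NormedAddCommGroup H] [InnerProductSpace ℂ H] [CompleteSpace H]
    (A B : H →L[ℂ] H), StrictlyPos A → StrictlyPos B →
      cfc f (arithMean A B) ≤ geomMean (cfc f A) (cfc f B)

/-- The non-commutative `f`-divergence functional
`Θ(Ã, B̃) = ∫_T B_t^{1/2} f(B_t^{-1/2} A_t B_t^{-1/2}) B_t^{1/2} dμ(t)` (a Bochner integral). -/
def Theta (f : ℝ → ℝ) {T : Type*} [MeasurableSpace T] (μ : Measure T)
    {H : Type*} [NormedAddCommGroup H] [InnerProductSpace ℂ H] [CompleteSpace H]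
    (A B : T → H →L[ℂ] H) : H →L[ℂ] H :=
  ∫ t, persp f (A t) (B t) ∂μ

/-!
Apply the hypothesis to the unital positive map `Φ(X) = (X₁₁ + X₂₂)/2` and to the block-diagonal
operator `X = A ⊕ B`. Since `f(A ⊕ B) = f(A) ⊕ f(B)`, it reads
`f(A∇B) ≤ ((f(A)⁻¹ + f(B)⁻¹)/2)⁻¹ = f(A)!f(B)`.
For the harmonic–geometric mean inequality, write `A = B^{1/2} C B^{1/2}`: each of the two means
satisfies `m(A, B) = B^{1/2} m(C, 1) B^{1/2}`, and `C!1 ≤ C^{1/2}` is the scalar inequality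
`2x/(1 + x) ≤ √x` transported by the functional calculus.
-/

open CFC ContinuousLinearMap
open scoped Ring

lemma WithLp.prod_ext {p : ENNReal} {α β : Type*} {x y : WithLp p (α × β)}
    (h₁ : x.fst = y.fst) (h₂ : x.snd = y.snd) : x = y :=
  (WithLp.ext_iff p).2 (Prod.ext h₁ h₂)

section BlockDiagonal

open WithLp

variable {𝕜 E F : Type*} [RCLike 𝕜]
  [NormedAddCommGroup E] [InnerProductSpace 𝕜 E] [CompleteSpace E]
  [NormedAddCommGroup F] [InnerProductSpace 𝕜 F] [CompleteSpace F]

@[simp] lemma WithLp.adjoint_fstL_apply (x : E) : adjoint (fstL 2 𝕜 E F) x = toLp 2 (x, 0) :=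
  ext_inner_left 𝕜 fun v => by simp [adjoint_inner_right]

@[simp] lemma WithLp.adjoint_sndL_apply (y : F) : adjoint (sndL 2 𝕜 E F) y = toLp 2 (0, y) :=
  ext_inner_left 𝕜 fun v => by simp [adjoint_inner_right]

def blockDiag : (E →L[𝕜] E) × (F →L[𝕜] F) →⋆ₐ[𝕜]
    (WithLp 2 (E × F) →L[𝕜] WithLp 2 (E × F)) where
  toFun P := adjoint (fstL 2 𝕜 E F) ∘L P.1 ∘L fstL 2 𝕜 E F +
    adjoint (sndL 2 𝕜 E F) ∘L P.2 ∘L sndL 2 𝕜 E F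
  map_one' := ContinuousLinearMap.ext fun x => WithLp.prod_ext (by simp) (by simp)
  map_mul' P Q := ContinuousLinearMap.ext fun x => WithLp.prod_ext (by simp) (by simp)
  map_zero' := by simp
  map_add' P Q := by
    simp only [Prod.fst_add, Prod.snd_add, add_comp, comp_add]
    abel
  commutes' c := ContinuousLinearMap.ext fun x => WithLp.prod_ext
    (by simp [Algebra.algebraMap_eq_smul_one]) (by simp [Algebra.algebraMap_eq_smul_one])
  map_star' P := by simp [adjoint_comp, comp_assoc, star_eq_adjoint]

lemma blockDiag_apply (P : (E →L[𝕜] E) × (F →L[𝕜] F)) :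
    blockDiag P = adjoint (fstL 2 𝕜 E F) ∘L P.1 ∘L fstL 2 𝕜 E F +
      adjoint (sndL 2 𝕜 E F) ∘L P.2 ∘L sndL 2 𝕜 E F :=
  rfl

lemma continuous_blockDiag : Continuous (blockDiag : (E →L[𝕜] E) × (F →L[𝕜] F) → _) := by
  show Continuous fun P : (E →L[𝕜] E) × (F →L[𝕜] F) => adjoint (fstL 2 𝕜 E F) ∘L P.1 ∘L
    fstL 2 𝕜 E F + adjoint (sndL 2 𝕜 E F) ∘L P.2 ∘L sndL 2 𝕜 E F
  fun_prop

lemma blockDiag_nonneg {X : E →L[𝕜] E} {Y : F →L[𝕜] F} (hX : 0 ≤ X) (hY : 0 ≤ Y) :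
    0 ≤ blockDiag (X, Y) := by
  rw [nonneg_iff_isPositive] at hX hY ⊢
  exact (hX.adjoint_conj _).add (hY.adjoint_conj _)

lemma isStrictlyPositive_blockDiag {X : E →L[𝕜] E} {Y : F →L[𝕜] F}
    (hX : IsStrictlyPositive X) (hY : IsStrictlyPositive Y) :
    IsStrictlyPositive (blockDiag (X, Y)) :=
  ⟨blockDiag_nonneg hX.nonneg hY.nonneg, (Prod.isUnit_iff.2 ⟨hX.isUnit, hY.isUnit⟩).map _⟩

lemma ringInverse_blockDiag {X : E →L[𝕜] E} {Y : F →L[𝕜] F} (hX : IsUnit X) (hY : IsUnit Y) :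
    (blockDiag (X, Y))⁻¹ʳ = blockDiag (X⁻¹ʳ, Y⁻¹ʳ) := by
  have hXY : IsUnit (blockDiag (X, Y)) := (Prod.isUnit_iff.2 ⟨hX, hY⟩).map _
  refine ((Ring.eq_mul_inverse_iff_mul_eq _ 1 _ hXY).2 ?_).symm.trans (one_mul _)
  rw [one_mul, ← map_mul, Prod.mk_mul_mk, Ring.inverse_mul_cancel _ hX,
    Ring.inverse_mul_cancel _ hY, Prod.mk_one_one, map_one]

end BlockDiagonal

section BlockDiagonalCFC

variable {E F : Type*} [NormedAddCommGroup E] [InnerProductSpace ℂ E] [CompleteSpace E]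
  [NormedAddCommGroup F] [InnerProductSpace ℂ F] [CompleteSpace F]

lemma cfc_blockDiag (f : ℝ → ℝ) {A : E →L[ℂ] E} {B : F →L[ℂ] F} (hA : IsSelfAdjoint A)
    (hB : IsSelfAdjoint B) (hf : ContinuousOn f (spectrum ℝ A ∪ spectrum ℝ B)) :
    cfc f (blockDiag (A, B)) = blockDiag (cfc f A, cfc f B) := by
  -- instance search does not find the real functional calculus of the product C⋆-algebra
  let : ContinuousFunctionalCalculus ℝ ((E →L[ℂ] E) × (F →L[ℂ] F)) IsSelfAdjoint :=
    IsSelfAdjoint.instContinuousFunctionalCalculus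
  have hAB : IsSelfAdjoint (A, B) := Prod.ext hA.star_eq hB.star_eq
  rw [← cfc_map_prod (S := ℂ) f A B hf hAB hA hB]
  exact (StarAlgHomClass.map_cfc blockDiag f (A, B) (by rwa [Prod.spectrum_eq])
    continuous_blockDiag hAB (hAB.map blockDiag)).symm

end BlockDiagonalCFC

section DiagBlockAverage

open WithLp

variable {E : Type*} [NormedAddCommGroup E] [InnerProductSpace ℂ E] [CompleteSpace E]

def diagBlockAverage :
    (WithLp 2 (E × E) →L[ℂ] WithLp 2 (E × E)) →ₗ[ℂ] (E →L[ℂ] E) where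
  toFun X := arithMean (fstL 2 ℂ E E ∘L X ∘L adjoint (fstL 2 ℂ E E))
    (sndL 2 ℂ E E ∘L X ∘L adjoint (sndL 2 ℂ E E))
  map_add' X Y := by
    simp only [arithMean, add_comp, comp_add, ← smul_add]
    abel_nf
  map_smul' c X := by
    simp only [arithMean, smul_comp, comp_smul, RingHom.id_apply, ← smul_add]
    exact smul_comm _ _ _

lemma diagBlockAverage_apply (X : WithLp 2 (E × E) →L[ℂ] WithLp 2 (E × E)) :
    diagBlockAverage X = arithMean (fstL 2 ℂ E E ∘L X ∘L adjoint (fstL 2 ℂ E E))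
      (sndL 2 ℂ E E ∘L X ∘L adjoint (sndL 2 ℂ E E)) :=
  rfl

lemma diagBlockAverage_nonneg {X : WithLp 2 (E × E) →L[ℂ] WithLp 2 (E × E)} (hX : 0 ≤ X) :
    0 ≤ diagBlockAverage X := by
  rw [nonneg_iff_isPositive] at hX
  rw [diagBlockAverage_apply, arithMean]
  exact smul_nonneg (by norm_num)
    ((nonneg_iff_isPositive _).2 ((hX.conj_adjoint _).add (hX.conj_adjoint _)))

lemma diagBlockAverage_blockDiag (X Y : E →L[ℂ] E) :
    diagBlockAverage (blockDiag (X, Y)) = arithMean X Y := by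
  rw [diagBlockAverage_apply]
  congr <;> ext x <;> simp [blockDiag_apply]

lemma diagBlockAverage_one : diagBlockAverage (1 : WithLp 2 (E × E) →L[ℂ] _) = 1 := by
  rw [← map_one blockDiag, Prod.one_eq_mk, diagBlockAverage_blockDiag, arithMean, ← two_smul ℝ,
    smul_smul]
  norm_num

end DiagBlockAverage

section Means

variable {H : Type*} [NormedAddCommGroup H] [InnerProductSpace ℂ H] [CompleteSpace H]

lemma opPow_eq_rpow {A : H →L[ℂ] H} (hA : 0 ≤ A) (r : ℝ) : opPow A r = A ^ r :=
  (rpow_eq_cfc_real hA).symm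

lemma opPow_half {A : H →L[ℂ] H} (hA : 0 ≤ A) : opPow A (1 / 2) = sqrt A := by
  rw [opPow_eq_rpow hA, sqrt_eq_rpow]

lemma opPow_neg_half {A : H →L[ℂ] H} (hA : IsStrictlyPositive A) :
    opPow A (-(1 / 2)) = sqrt A⁻¹ʳ := by
  obtain ⟨u, rfl⟩ := hA.isUnit
  rw [opPow_eq_rpow hA.nonneg, rpow_neg u _ hA.nonneg, ← Ring.inverse_unit, sqrt_eq_rpow]

lemma geomMean_eq_conjSqrt {B : H →L[ℂ] H} (hB : IsStrictlyPositive B) (A : H →L[ℂ] H) :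
    geomMean A B = conjSqrt B (opPow (conjSqrt B⁻¹ʳ A) (1 / 2)) := by
  rw [geomMean, opPow_half hB.nonneg, opPow_neg_half hB]
  rfl

lemma harmMean_conjSqrt {C : H →L[ℂ] H} (hC : IsStrictlyPositive C) (A B : H →L[ℂ] H) :
    harmMean (conjSqrt C A) (conjSqrt C B) = conjSqrt C (harmMean A B) := by
  rw [harmMean, harmMean, ringInverse_conjSqrt C A, ringInverse_conjSqrt C B, ← map_add,
    ← map_smul, ringInverse_conjSqrt _ _ hC.ringInverse, Ring.inverse_inverse hC.isUnit]

lemma harm_mean_one_le_rpow_half {x : ℝ} (hx : 0 < x) :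
    (2⁻¹ * (x⁻¹ + 1))⁻¹ ≤ x ^ (1 / 2 : ℝ) := by
  obtain ⟨s, hs, rfl⟩ : ∃ s, 0 < s ∧ x = s ^ 2 :=
    ⟨√x, Real.sqrt_pos.2 hx, (Real.sq_sqrt hx.le).symm⟩
  rw [← Real.sqrt_eq_rpow, Real.sqrt_sq hs.le, inv_le_comm₀ (by positivity) hs]
  field_simp
  nlinarith [sq_nonneg (s - 1)]

lemma harmMean_one_right_le_opPow_half {C : H →L[ℂ] H} (hC : IsStrictlyPositive C) :
    harmMean C 1 ≤ opPow C (1 / 2) := by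
  have hpos : ∀ x ∈ spectrum ℝ C, 0 < x := fun x hx => hC.spectrum_pos hx
  have hinv : ContinuousOn (·⁻¹ : ℝ → ℝ) (spectrum ℝ C) :=
    continuousOn_inv₀.mono fun x hx => (hpos x hx).ne'
  have hmean : ContinuousOn (fun x : ℝ => 2⁻¹ * (x⁻¹ + 1)) (spectrum ℝ C) :=
    continuousOn_const.mul (hinv.add continuousOn_const)
  have hmean_pos : ∀ x ∈ spectrum ℝ C, 0 < 2⁻¹ * (x⁻¹ + 1) := fun x hx => by
    have := hpos x hx
    positivity
  have hC_inv : C⁻¹ʳ = cfc (·⁻¹ : ℝ → ℝ) C := by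
    have h := cfc_inv id C fun x hx => (hpos x hx).ne'
    rw [cfc_id ℝ C] at h
    exact h.symm
  have hharm : harmMean C 1 = cfc (fun x : ℝ => (2⁻¹ * (x⁻¹ + 1))⁻¹) C := by
    rw [cfc_inv _ _ (fun x hx => (hmean_pos x hx).ne') hmean,
      cfc_const_mul 2⁻¹ (fun x : ℝ => x⁻¹ + 1) C (hinv.add continuousOn_const),
      cfc_add_const 1 (·⁻¹ : ℝ → ℝ) C hinv, ← hC_inv,
      harmMean, Ring.inverse_one, Algebra.algebraMap_eq_smul_one, one_smul]
  rw [hharm, opPow]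
  exact cfc_mono (fun x hx => harm_mean_one_le_rpow_half (hpos x hx))
    (hmean.inv₀ fun x hx => (hmean_pos x hx).ne')
    (Real.continuous_rpow_const (by norm_num)).continuousOn

theorem harmMean_le_geomMean {A B : H →L[ℂ] H} (hA : IsStrictlyPositive A)
    (hB : IsStrictlyPositive B) : harmMean A B ≤ geomMean A B := by
  set C := conjSqrt B⁻¹ʳ A
  have hC : IsStrictlyPositive C := (isStrictlyPositive_conjSqrt_iff _ _ hB.ringInverse).2 hA
  calc harmMean A B = harmMean (conjSqrt B C) (conjSqrt B 1) := by
        rw [conjSqrt_conjSqrt_ringInverse _ _ hB, conjSqrt_one _ hB.nonneg]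
    _ = conjSqrt B (harmMean C 1) := harmMean_conjSqrt hB C 1
    _ ≤ conjSqrt B (opPow C (1 / 2)) := conjSqrt_monotone (harmMean_one_right_le_opPow_half hC)
    _ = geomMean A B := (geomMean_eq_conjSqrt hB A).symm

end Means

lemma IsStrictlyPositive.cfc_of_pos {A : Type*} [CStarAlgebra A] [PartialOrder A]
    [StarOrderedRing A] {f : ℝ → ℝ} (hf_cont : ContinuousOn f (Set.Ioi 0))
    (hf_pos : ∀ x : ℝ, 0 < x → 0 < f x) {a : A} (ha : IsStrictlyPositive a) :
    IsStrictlyPositive (cfc f a) :=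
  (cfc_isStrictlyPositive_iff f a (hf_cont.mono fun _ hx => ha.spectrum_pos hx)
    ha.isSelfAdjoint).2 fun x hx => hf_pos x (ha.spectrum_pos hx)

theorem stmt_3 (f : ℝ → ℝ) (hf_cont : ContinuousOn f (Set.Ioi 0))
    (hf_pos : ∀ x : ℝ, 0 < x → 0 < f x)
    {H : Type*} [NormedAddCommGroup H] [InnerProductSpace ℂ H] [CompleteSpace H]
    (h : ∀ Φ : (WithLp 2 (H × H) →L[ℂ] WithLp 2 (H × H)) →ₗ[ℂ] (H →L[ℂ] H),
      (∀ X : WithLp 2 (H × H) →L[ℂ] WithLp 2 (H × H), 0 ≤ X → 0 ≤ Φ X) → Φ 1 = 1 →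
        ∀ X : WithLp 2 (H × H) →L[ℂ] WithLp 2 (H × H), StrictlyPos X →
          cfc f (Φ X) ≤ Ring.inverse (Φ (Ring.inverse (cfc f X))))
    (A B : H →L[ℂ] H) (hA : StrictlyPos A) (hB : StrictlyPos B) :
    cfc f (arithMean A B) ≤ harmMean (cfc f A) (cfc f B) ∧
      cfc f (arithMean A B) ≤ geomMean (cfc f A) (cfc f B) := by
  have hA : IsStrictlyPositive A := hA
  have hB : IsStrictlyPositive B := hB
  have hfA := hA.cfc_of_pos hf_cont hf_pos
  have hfB := hB.cfc_of_pos hf_cont hf_pos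
  have hf_spec : ContinuousOn f (spectrum ℝ A ∪ spectrum ℝ B) :=
    hf_cont.mono <| Set.union_subset (fun _ hx => hA.spectrum_pos hx)
      (fun _ hx => hB.spectrum_pos hx)
  have key := h diagBlockAverage (fun _ => diagBlockAverage_nonneg) diagBlockAverage_one
    (blockDiag (A, B)) (isStrictlyPositive_blockDiag hA hB)
  rw [cfc_blockDiag f hA.isSelfAdjoint hB.isSelfAdjoint hf_spec,
    ringInverse_blockDiag hfA.isUnit hfB.isUnit, diagBlockAverage_blockDiag,
    diagBlockAverage_blockDiag] at key
  exact ⟨key, key.trans (harmMean_le_geomMean hfA hfB)⟩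
end
end

section
/- Let H be a complex Hilbert space, A, B, C ∈ B(H) strictly positive operators, and x ∈ H a unit vector. Then ⟨Bx, x⟩ · ⟨((A+C)/2)x, x⟩⁻¹ · ⟨Bx, x⟩ ≤ √(⟨BA⁻¹Bx, x⟩ · ⟨BC⁻¹Bx, x⟩) ≤ ⟨B((A⁻¹+C⁻¹)/2)Bx, x⟩, where all inner products are positive real numbers. -/
noncomputable section

open MeasureTheory

universe u

/-! With `z = A⁻¹ B x` one has `⟨Bx, x⟩ = ⟨Ax, z⟩` and `⟨B A⁻¹ B x, x⟩ = ⟨Az, z⟩`, so the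
Cauchy–Schwarz inequality for the positive form `⟨A ·, ·⟩` gives
`⟨Bx, x⟩² ≤ ⟨Ax, x⟩ ⟨B A⁻¹ B x, x⟩`, and likewise for `C`. Multiplying the two bounds and using
`4 ⟨Ax, x⟩ ⟨Cx, x⟩ ≤ (⟨Ax, x⟩ + ⟨Cx, x⟩)²` yields the left inequality; the right one is the
AM–GM inequality for two nonnegative reals. -/

lemma mul_inv_mul_le_sqrt_mul {b α γ a c : ℝ} (hα : 0 ≤ α) (hγ : 0 ≤ γ) (ha : 0 ≤ a)
    (hc : 0 ≤ c) (hαa : b ^ 2 ≤ α * a) (hγc : b ^ 2 ≤ γ * c) :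
    b * (2⁻¹ * (α + γ))⁻¹ * b ≤ √(a * c) := by
  rcases (add_nonneg hα hγ).eq_or_lt with hsum | hsum
  · simp [← hsum] -- `0⁻¹ = 0`, so the left side vanishes
  have hlhs : b * (2⁻¹ * (α + γ))⁻¹ * b = 2 * b ^ 2 / (α + γ) := by field_simp
  rw [hlhs, Real.le_sqrt (by positivity) (by positivity), div_pow, div_le_iff₀ (by positivity)]
  -- `b⁴ ≤ αγ·ac` and `4αγ ≤ (α + γ)²`
  nlinarith [mul_le_mul hαa hγc (sq_nonneg b) (by positivity),
    mul_nonneg (sq_nonneg (α - γ)) (mul_nonneg ha hc)]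

lemma sqrt_mul_le_inv_two_mul_add {a c : ℝ} (ha : 0 ≤ a) (hc : 0 ≤ c) :
    √(a * c) ≤ 2⁻¹ * (a + c) :=
  Real.sqrt_le_iff.mpr ⟨by positivity, by nlinarith [sq_nonneg (a - c)]⟩

section InnerProductSpace

variable {H : Type*} [NormedAddCommGroup H] [InnerProductSpace ℂ H]

lemma rIP_nonneg {P : H →L[ℂ] H} (hP : 0 ≤ P) (x : H) : 0 ≤ rIP P x :=
  ((P.nonneg_iff_isPositive).mp hP).re_inner_nonneg_left x

lemma rIP_add (P Q : H →L[ℂ] H) (x : H) : rIP (P + Q) x = rIP P x + rIP Q x := by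
  simp only [rIP, add_apply, inner_add_left, Complex.add_re]

lemma rIP_smul (r : ℝ) (P : H →L[ℂ] H) (x : H) : rIP (r • P) x = r * rIP P x := by
  simp [rIP]

lemma rIP_arithMean (P Q : H →L[ℂ] H) (x : H) :
    rIP (arithMean P Q) x = 2⁻¹ * (rIP P x + rIP Q x) := by
  rw [arithMean, rIP_smul, rIP_add]

lemma rIP_mul_arithMean_mul (B P Q : H →L[ℂ] H) (x : H) :
    rIP (B * ((2 : ℝ)⁻¹ • (P + Q)) * B) x = 2⁻¹ * (rIP (B * P * B) x + rIP (B * Q * B) x) := by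
  rw [mul_smul_comm, smul_mul_assoc, mul_add, add_mul, rIP_smul, rIP_add]

lemma apply_inverse_apply {A : H →L[ℂ] H} (hA : IsUnit A) (x : H) : A (Ring.inverse A x) = x := by
  rw [← mul_apply_eq_comp, Ring.mul_inverse_cancel A hA, one_apply_eq_self]

end InnerProductSpace

section CompleteSpace

variable {H : Type*} [NormedAddCommGroup H] [InnerProductSpace ℂ H] [CompleteSpace H]

lemma re_inner_sq_le {P : H →L[ℂ] H} (hP : 0 ≤ P) (x y : H) :
    (inner ℂ (P x) y).re ^ 2 ≤ rIP P x * rIP P y := by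
  obtain ⟨S, rfl⟩ := CStarAlgebra.nonneg_iff_eq_star_mul_self.mp hP
  have hS (u v : H) : inner ℂ ((star S * S) u) v = inner ℂ (S u) (S v) := by
    rw [ContinuousLinearMap.star_eq_adjoint, mul_apply_eq_comp,
      ContinuousLinearMap.adjoint_inner_left]
  simp only [rIP, hS, ← RCLike.re_to_complex, inner_self_eq_norm_sq]
  calc RCLike.re (inner ℂ (S x) (S y)) ^ 2 ≤ ‖inner ℂ (S x) (S y)‖ ^ 2 :=
        sq_le_sq' (neg_le_of_abs_le (RCLike.abs_re_le_norm _)) (RCLike.re_le_norm _)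
    _ ≤ (‖S x‖ * ‖S y‖) ^ 2 := by gcongr; exact norm_inner_le_norm _ _
    _ = ‖S x‖ ^ 2 * ‖S y‖ ^ 2 := mul_pow _ _ _

lemma rIP_mul_inverse_mul {A B : H →L[ℂ] H} (hA : IsUnit A) (hB : IsSelfAdjoint B) (x : H) :
    rIP (B * Ring.inverse A * B) x = rIP A (Ring.inverse A (B x)) := by
  set z := Ring.inverse A (B x)
  calc rIP (B * Ring.inverse A * B) x = (inner ℂ (B z) x).re := rfl
    _ = (inner ℂ z (B x)).re := congrArg Complex.re (hB.isSymmetric z x)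
    _ = (inner ℂ z (A z)).re := by rw [apply_inverse_apply hA]
    _ = rIP A z := inner_re_symm (𝕜 := ℂ) _ _

lemma rIP_eq_re_inner_inverse {A B : H →L[ℂ] H} (hA : IsUnit A) (hA' : IsSelfAdjoint A)
    (x : H) : rIP B x = (inner ℂ (A x) (Ring.inverse A (B x))).re :=
  calc rIP B x = (inner ℂ x (B x)).re := inner_re_symm (𝕜 := ℂ) _ _
    _ = (inner ℂ x (A (Ring.inverse A (B x)))).re := by rw [apply_inverse_apply hA]
    _ = (inner ℂ (A x) (Ring.inverse A (B x))).re :=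
      congrArg Complex.re (hA'.isSymmetric x _).symm

namespace StrictlyPos

variable {A B : H →L[ℂ] H} (hA : StrictlyPos A) (hB : IsSelfAdjoint B) (x : H)
include hA hB

lemma rIP_mul_inverse_mul_nonneg : 0 ≤ rIP (B * Ring.inverse A * B) x :=
  rIP_mul_inverse_mul hA.2 hB x ▸ rIP_nonneg hA.1 _

lemma rIP_sq_le : rIP B x ^ 2 ≤ rIP A x * rIP (B * Ring.inverse A * B) x := by
  rw [rIP_eq_re_inner_inverse hA.2 (IsSelfAdjoint.of_nonneg hA.1), rIP_mul_inverse_mul hA.2 hB]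
  exact re_inner_sq_le hA.1 _ _

end StrictlyPos

end CompleteSpace

theorem stmt_18_general {H : Type*} [NormedAddCommGroup H] [InnerProductSpace ℂ H] [CompleteSpace H]
    (A B C : H →L[ℂ] H) (hA : StrictlyPos A) (hB : StrictlyPos B) (hC : StrictlyPos C)
    (x : H) :
    rIP B x * (rIP (arithMean A C) x)⁻¹ * rIP B x ≤
      Real.sqrt (rIP (B * Ring.inverse A * B) x * rIP (B * Ring.inverse C * B) x) ∧
      Real.sqrt (rIP (B * Ring.inverse A * B) x * rIP (B * Ring.inverse C * B) x) ≤
        rIP (B * ((2 : ℝ)⁻¹ • (Ring.inverse A + Ring.inverse C)) * B) x := by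
  have hB' : IsSelfAdjoint B := .of_nonneg hB.1
  have ha := hA.rIP_mul_inverse_mul_nonneg hB' x
  have hc := hC.rIP_mul_inverse_mul_nonneg hB' x
  rw [rIP_arithMean, rIP_mul_arithMean_mul]
  exact ⟨mul_inv_mul_le_sqrt_mul (rIP_nonneg hA.1 x) (rIP_nonneg hC.1 x) ha hc
      (hA.rIP_sq_le hB' x) (hC.rIP_sq_le hB' x),
    sqrt_mul_le_inv_two_mul_add ha hc⟩

theorem stmt_18 {H : Type*} [NormedAddCommGroup H] [InnerProductSpace ℂ H] [CompleteSpace H]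
    (A B C : H →L[ℂ] H) (hA : StrictlyPos A) (hB : StrictlyPos B) (hC : StrictlyPos C)
    (x : H) (hx : ‖x‖ = 1) :
    rIP B x * (rIP (arithMean A C) x)⁻¹ * rIP B x ≤
      Real.sqrt (rIP (B * Ring.inverse A * B) x * rIP (B * Ring.inverse C * B) x) ∧
      Real.sqrt (rIP (B * Ring.inverse A * B) x * rIP (B * Ring.inverse C * B) x) ≤
        rIP (B * ((2 : ℝ)⁻¹ • (Ring.inverse A + Ring.inverse C)) * B) x :=
  stmt_18_general A B C hA hB hC x
end
end
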